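/- arXiv:1405.2376 — 4 statements merged into one kernel-verified Lean document; each statement's English description precedes it below -/
import Mathlib

section
/- For any deterministic Moore machine $q$ with input alphabet of size at least 2 and output alphabet of size at least 2, and any finite input sequence $\vec{\imath}$, there exists a Moore machine $q_I$ over the same alphabets such that (1) $q_I$ produces exactly the same output sequence as $q$ on $\vec{\imath}$, and (2) $q_I$ has interference: there exist two input sequences of equal length whose corresponding output sequences differ. -/
/-- A deterministic Moore machine with state space `S`, input alphabet `I`,
output alphabet `O`. -/
structure Moore (S I O : Type*) where
  s0 : S
  tr : S → I → S
  out : S → O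

/-- Output sequence produced from state `s` on an input sequence. -/
def Moore.run {S I O : Type*} (q : Moore S I O) : S → List I → List O
  | s, [] => [q.out s]
  | s, i :: is => q.out s :: Moore.run q (q.tr s i) is

/-- Output sequence from the initial state. -/
def Moore.exec {S I O : Type*} (q : Moore S I O) (is : List I) : List O :=
  q.run q.s0 is

/-! The machine `qI` ignores its inputs for `|is|` steps, emitting the outputs of `q` along the
prefixes of `is`; its next state, and hence its last output, then depends on the input read. -/

namespace Moore

variable {S S' I O : Type*}

def goto (q : Moore S I O) : S → List I → S
  | s, [] => s
  | s, i :: is => q.goto (q.tr s i) is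

@[simp]
lemma goto_nil (q : Moore S I O) (s : S) : q.goto s [] = s := rfl

@[simp]
lemma goto_cons (q : Moore S I O) (s : S) (i : I) (l : List I) :
    q.goto s (i :: l) = q.goto (q.tr s i) l := rfl

lemma goto_append (q : Moore S I O) (s : S) (l₁ l₂ : List I) :
    q.goto s (l₁ ++ l₂) = q.goto (q.goto s l₁) l₂ := by
  induction l₁ generalizing s with
  | nil => rfl
  | cons i l ih => exact ih _

lemma run_ne_nil (q : Moore S I O) (s : S) (l : List I) : q.run s l ≠ [] := by
  cases l <;> simp [run]

lemma run_getLast (q : Moore S I O) (s : S) (l : List I) :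
    (q.run s l).getLast (q.run_ne_nil s l) = q.out (q.goto s l) := by
  induction l generalizing s with
  | nil => rfl
  | cons i l ih =>
    simp only [run, goto_cons]
    rw [List.getLast_cons (q.run_ne_nil _ l), ih]

lemma exec_ne_exec_of_out_goto_ne (q : Moore S I O) {l₁ l₂ : List I}
    (h : q.out (q.goto q.s0 l₁) ≠ q.out (q.goto q.s0 l₂)) : q.exec l₁ ≠ q.exec l₂ := by
  intro heq
  apply h
  rw [← run_getLast, ← run_getLast]
  exact List.getLast_congr _ _ heq

lemma run_eq_run_of_out_goto_take (q : Moore S I O) (q' : Moore S' I O) (s : S) (s' : S')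
    (l : List I)
    (h : ∀ j ≤ l.length, q.out (q.goto s (l.take j)) = q'.out (q'.goto s' (l.take j))) :
    q.run s l = q'.run s' l := by
  induction l generalizing s s' with
  | nil => simpa [run] using h 0
  | cons i l ih =>
    simp only [run]
    congr 1
    · simpa using h 0
    · exact ih _ _ fun j hj => by simpa using h (j + 1) (by simpa using hj)

def playThenBranch (n : ℕ) (f : Fin (n + 1) → O) (p : I → Bool) (g : Bool → O) :
    Moore (Fin (n + 1) ⊕ Bool) I O where
  s0 := .inl 0
  tr
    | .inl k, i => if h : (k : ℕ) < n then .inl ⟨k + 1, by omega⟩ else .inr (p i)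
    | .inr b, _ => .inr b
  out
    | .inl k => f k
    | .inr b => g b

section playThenBranch

variable {n : ℕ} {f : Fin (n + 1) → O} {p : I → Bool} {g : Bool → O}

@[simp]
lemma playThenBranch_out_inl (k : Fin (n + 1)) : (playThenBranch n f p g).out (.inl k) = f k := rfl

@[simp]
lemma playThenBranch_out_inr (b : Bool) : (playThenBranch n f p g).out (.inr b) = g b := rfl

lemma playThenBranch_tr_inl_of_lt (k : Fin (n + 1)) (hk : (k : ℕ) < n) (i : I) :
    (playThenBranch n f p g).tr (.inl k) i = .inl ⟨k + 1, by omega⟩ :=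
  dif_pos hk

lemma playThenBranch_tr_inl_last (i : I) :
    (playThenBranch n f p g).tr (.inl (Fin.last n)) i = .inr (p i) :=
  dif_neg (lt_irrefl n)

lemma playThenBranch_goto_inl (k : ℕ) (l : List I) (hl : k + l.length ≤ n) :
    (playThenBranch n f p g).goto (.inl ⟨k, by omega⟩) l = .inl ⟨k + l.length, by omega⟩ := by
  induction l generalizing k with
  | nil => rfl
  | cons i l ih =>
    simp only [List.length_cons] at hl
    rw [goto_cons, playThenBranch_tr_inl_of_lt _ (show k < n by omega), ih (k + 1) (by omega)]
    simp only [List.length_cons, Sum.inl.injEq, Fin.mk.injEq]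
    omega

lemma playThenBranch_goto_s0 (l : List I) (hl : l.length ≤ n) :
    (playThenBranch n f p g).goto (playThenBranch n f p g).s0 l = .inl ⟨l.length, by omega⟩ := by
  have h := playThenBranch_goto_inl (f := f) (p := p) (g := g) 0 l (by omega)
  simp only [Nat.zero_add] at h
  exact h

lemma playThenBranch_goto_s0_append_singleton (l : List I) (hl : l.length = n) (i : I) :
    (playThenBranch n f p g).goto (playThenBranch n f p g).s0 (l ++ [i]) = .inr (p i) := by
  rw [goto_append, playThenBranch_goto_s0 l hl.le, goto_cons, goto_nil]
  subst hl
  exact playThenBranch_tr_inl_last i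

end playThenBranch

end Moore

theorem exists_interfering_machine_matching_trace_general
    {S I O : Type*} [Fintype I] [Fintype O]
    (hI : 1 < Fintype.card I) (hO : 1 < Fintype.card O)
    (q : Moore S I O) (is : List I) :
    ∃ (S' : Type) (_ : Fintype S') (qI : Moore S' I O),
      qI.exec is = q.exec is ∧
      ∃ is1 is2 : List I, is1.length = is2.length ∧ qI.exec is1 ≠ qI.exec is2 := by
  classical
  obtain ⟨i₀, i₁, hi⟩ := Fintype.exists_pair_of_one_lt_card hI
  obtain ⟨o₀, o₁, ho⟩ := Fintype.exists_pair_of_one_lt_card hO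
  let qI := Moore.playThenBranch is.length (fun k => q.out (q.goto q.s0 (is.take k)))
    (fun i => decide (i = i₀)) (fun b => cond b o₀ o₁)
  refine ⟨_, inferInstance, qI, ?_, is ++ [i₀], is ++ [i₁], by simp, ?_⟩
  · refine qI.run_eq_run_of_out_goto_take q _ _ is fun j hj => ?_
    rw [Moore.playThenBranch_goto_s0 _ (by simp)]
    simp [qI, hj]
  · apply qI.exec_ne_exec_of_out_goto_ne
    rw [Moore.playThenBranch_goto_s0_append_singleton is rfl,
      Moore.playThenBranch_goto_s0_append_singleton is rfl]
    simpa [qI, hi.symm] using ho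

/-- for any finite deterministic Moore machine `q` with at least two
inputs and two outputs, and any input sequence `is`, there is a finite Moore
machine `qI` over the same alphabets that produces exactly the same output
sequence as `q` on `is` and has interference: two equal-length input sequences
yielding different output sequences. -/
theorem exists_interfering_machine_matching_trace
    {S I O : Type*} [Fintype S] [Fintype I] [Fintype O]
    (hI : 1 < Fintype.card I) (hO : 1 < Fintype.card O)
    (q : Moore S I O) (is : List I) :
    ∃ (S' : Type) (_ : Fintype S') (qI : Moore S' I O),
      qI.exec is = q.exec is ∧
      ∃ is1 is2 : List I, is1.length = is2.length ∧ qI.exec is1 ≠ qI.exec is2 :=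
  exists_interfering_machine_matching_trace_general hI hO q is
end

section
/- Let $s_n$ be the test statistic on data vectors that returns $1$ if the first component of the vector contains the nonce (i.e., satisfies a fixed predicate $n$) and $0$ otherwise. For the one-tailed permutation test $\mathsf{pt}(s,\vec{y}) = \frac{1}{|\vec{y}|!} \sum_{\pi \in \Pi(|\vec{y}|)} I[s(\vec{y}) \leq s(\pi(\vec{y}))]$, if the first component of $\vec{y}$ satisfies the predicate $n$, then $\mathsf{pt}(s_n, \vec{y}) = \mathsf{count}(\vec{y}, n)/|\vec{y}|$, where $\mathsf{count}(\vec{y},n)$ is the number of components of $\vec{y}$ satisfying $n$. -/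
open scoped Classical

/-- One-tailed (signed) permutation test p-value. -/
noncomputable def pt {R : Type*} (m : ℕ) (s : (Fin m → R) → ℝ) (y : Fin m → R) : ℝ :=
  (∑ π : Equiv.Perm (Fin m), if s y ≤ s (y ∘ π) then (1 : ℝ) else 0) / (Nat.factorial m)

/-!
Precomposing with the transposition `swap a b` shows that `∑ π, f (π a)` does not depend on `a`.
Summing over all `a` then gives `|α| · ∑ π, f (π a) = ∑ π, ∑ b, f (π b) = |α|! · ∑ j, f j`.
For the nonce statistic, `s_n y = 1` makes the summand of `pt` equal to `I[n (y (π 0))]`,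
so `pt = (|y|! / |y|) · count(y, n) / |y|!`.
-/

namespace Equiv.Perm

variable {α : Type*} [Fintype α] [DecidableEq α]

theorem sum_comp_apply_eq {M : Type*} [AddCommMonoid M] (f : α → M) (a b : α) :
    ∑ π : Perm α, f (π a) = ∑ π : Perm α, f (π b) :=
  Fintype.sum_equiv (Equiv.mulRight (swap a b)) _ _ fun π => by simp

theorem card_nsmul_sum_comp_apply {M : Type*} [AddCommMonoid M] (f : α → M) (a : α) :
    Fintype.card α • ∑ π : Perm α, f (π a) = (Fintype.card α).factorial • ∑ j, f j :=
  calc Fintype.card α • ∑ π : Perm α, f (π a)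
      = ∑ b : α, ∑ π : Perm α, f (π b) := by simp [← sum_comp_apply_eq f a]
    _ = ∑ π : Perm α, ∑ b, f (π b) := Finset.sum_comm
    _ = ∑ π : Perm α, ∑ j, f j := by simp only [Equiv.sum_comp]
    _ = (Fintype.card α).factorial • ∑ j, f j := by simp [Fintype.card_perm]

theorem sum_comp_apply_div_factorial {K : Type*} [Field K] [CharZero K] (f : α → K) (a : α) :
    (∑ π : Perm α, f (π a)) / (Fintype.card α).factorial = (∑ j, f j) / Fintype.card α := by
  have : Nonempty α := ⟨a⟩
  rw [div_eq_div_iff (by simp [Nat.factorial_ne_zero]) (by simp [Fintype.card_ne_zero])]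
  simpa [nsmul_eq_mul, mul_comm] using card_nsmul_sum_comp_apply f a

end Equiv.Perm

theorem ite_one_le_indicator {K : Type*} [Semiring K] [LinearOrder K] [IsStrictOrderedRing K]
    (p : Prop) [Decidable p] :
    (if (1 : K) ≤ (if p then 1 else 0) then (1 : K) else 0) = if p then 1 else 0 := by
  by_cases hp : p <;> simp [hp]

/-- for the nonce-indicator statistic `s_n` (1 iff the first component
satisfies `n`), if the first component of `y` satisfies `n`, then
`pt(s_n, y) = count(y, n) / |y|`. -/
theorem pt_nonce_eq_count_div_length
    {R : Type*} (m : ℕ) (hm : 0 < m) (n : R → Prop)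
    (y : Fin m → R) (h1 : n (y ⟨0, hm⟩)) :
    pt m (fun v => if n (v ⟨0, hm⟩) then (1 : ℝ) else 0) y =
      ((Finset.univ.filter fun j : Fin m => n (y j)).card : ℝ) / m := by
  simp only [pt, Function.comp_apply, if_pos h1, ite_one_le_indicator]
  simpa [Finset.sum_boole] using
    Equiv.Perm.sum_comp_apply_div_factorial (fun j => if n (y j) then (1 : ℝ) else 0) ⟨0, hm⟩
end

section
/- Consider a permutation test over a data vector of length $2n$ where the test statistic $s$ depends only on the unordered pair (multiset of the first $n$ components, multiset of the last $n$ components) and is symmetric in the two groups. Then the p-value $\mathsf{pt}(s, \vec{y})$ equals the fraction, over the $\binom{2n}{n}$ equal-size bipartitions of the index set, of bipartitions $B$ with $s(\vec{y}) \leq s(\vec{y}_B)$ (where $\vec{y}_B$ rearranges $\vec{y}$ according to $B$); in particular, since the identity bipartition and its swap both contribute, $\mathsf{pt}(s, \vec{y}) \geq 2/\binom{2n}{n} = 1/\binom{2n-1}{n}$. -/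
open scoped Classical

/-- Multiset of the first `n` components of a vector of length `n + n`. -/
def grp1 {R : Type*} (n : ℕ) (v : Fin (n + n) → R) : Multiset R :=
  (Finset.univ : Finset (Fin n)).val.map fun j => v (Fin.castAdd n j)

/-- Multiset of the last `n` components of a vector of length `n + n`. -/
def grp2 {R : Type*} (n : ℕ) (v : Fin (n + n) → R) : Multiset R :=
  (Finset.univ : Finset (Fin n)).val.map fun j => v (Fin.natAdd n j)

/-- Rearrange `y` according to an equal-size bipartition `B`: the first `n`
components come from `B` and the last `n` from its complement. -/
noncomputable def arrange {R : Type*} (n : ℕ) (y : Fin (n + n) → R)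
    (B : Finset (Fin (n + n))) : Fin (n + n) → R :=
  if h : B.card = n ∧ Bᶜ.card = n then
    Fin.addCases (fun a => y (B.orderEmbOfFin h.1 a)) (fun a => y (Bᶜ.orderEmbOfFin h.2 a))
  else y

/-! The map `π ↦ π • firstHalf n` sends the permutations of the `2n` indices onto the
`n`-subsets, and for a group-based statistic `s (y ∘ π)` only depends on this image `B`: it is
`s (arrange n y B)`. The fibres of the map are left cosets of the stabiliser of the first half, so
they all have the same size and averaging over permutations is averaging over `n`-subsets.
The first half and its complement (its image under `finAddFlip`) both give the observed value
of `s`, by symmetry, so at least two of the `C(2n, n) = 2 C(2n-1, n)` subsets are counted. -/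

open Finset
open scoped Pointwise

namespace MulAction

variable {G X : Type*} [Group G] [Fintype G] [MulAction G X] [DecidableEq X]

theorem sum_smul_eq_nsmul_sum_orbit {M : Type*} [AddCommMonoid M] (φ : X → M) (x : X) :
    ∑ g : G, φ (g • x) =
      #{g : G | g • x = x} • ∑ y ∈ univ.image (· • x : G → X), φ y := by
  rw [sum_comp, smul_sum]
  refine sum_congr rfl fun y hy => ?_
  obtain ⟨h, -, rfl⟩ := mem_image.1 hy
  congr 1
  -- the fibre over `h • x` is the coset `h * {g | g • x = x}`
  refine card_nbij' (h⁻¹ * ·) (h * ·) ?_ ?_ ?_ ?_ <;> intro g hg <;> simp_all [mul_smul]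

theorem sum_smul_div_card_eq {K : Type*} [Semifield K] [CharZero K] (φ : X → K) (x : X) :
    (∑ g : G, φ (g • x)) / Fintype.card G =
      (∑ y ∈ univ.image (· • x : G → X), φ y) / #(univ.image (· • x : G → X)) := by
  have hcard := sum_smul_eq_nsmul_sum_orbit (G := G) (fun _ => (1 : K)) x
  have hfix : (#{g : G | g • x = x} : K) ≠ 0 :=
    Nat.cast_ne_zero.2 (card_ne_zero.2 ⟨1, by simp⟩)
  simp only [sum_const, card_univ, nsmul_eq_mul, mul_one] at hcard
  rw [sum_smul_eq_nsmul_sum_orbit, hcard, nsmul_eq_mul, mul_div_mul_left _ _ hfix]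

end MulAction

theorem Finset.image_perm_smul_eq_powersetCard {α : Type*} [Fintype α] [DecidableEq α]
    (S : Finset α) : univ.image (fun σ : Equiv.Perm α => σ • S) = powersetCard #S univ := by
  ext B
  simp only [mem_image, mem_univ, true_and, mem_powersetCard_univ]
  refine ⟨fun ⟨σ, hσ⟩ => hσ ▸ card_smul_finset σ S, fun hB => ?_⟩
  have := Set.powersetCard.isPretransitive (α := α) (n := #S)
  obtain ⟨σ, hσ⟩ := MulAction.exists_smul_eq (Equiv.Perm α)
    (⟨S, rfl⟩ : Set.powersetCard α #S) ⟨B, hB⟩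
  exact ⟨σ, congrArg Subtype.val hσ⟩

theorem Finset.val_map_perm_smul {α β : Type*} [DecidableEq α] (σ : Equiv.Perm α)
    (S : Finset α) (y : α → β) : (σ • S).val.map y = S.val.map (y ∘ σ) := by
  rw [smul_finset_def, image_val_of_injOn (MulAction.injective σ).injOn, Multiset.map_map]
  rfl

theorem Finset.perm_smul_compl {α : Type*} [Fintype α] [DecidableEq α] (σ : Equiv.Perm α)
    (S : Finset α) : σ • Sᶜ = (σ • S)ᶜ :=
  coe_injective (by simp [Set.smul_set_compl])

theorem Nat.choose_add_self_eq_two_mul {n : ℕ} (hn : 0 < n) :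
    (n + n).choose n = 2 * (n + n - 1).choose n := by
  obtain ⟨m, rfl⟩ : ∃ m, n = m + 1 := ⟨n - 1, by omega⟩
  rw [show m + 1 + (m + 1) = (m + 1 + m) + 1 by omega, Nat.add_sub_cancel,
    Nat.choose_succ_succ', Nat.choose_symm_add, two_mul]

def IsGroupBased {R : Type*} (n : ℕ) (s : (Fin (n + n) → R) → ℝ) : Prop :=
  ∀ v w : Fin (n + n) → R, grp1 n v = grp1 n w → grp2 n v = grp2 n w → s v = s w

def firstHalf (n : ℕ) : Finset (Fin (n + n)) :=
  univ.map (Fin.castAddEmb n)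

theorem card_firstHalf (n : ℕ) : #(firstHalf n) = n := by
  simp [firstHalf]

theorem compl_firstHalf (n : ℕ) : (firstHalf n)ᶜ = univ.map (Fin.natAddEmb n) := by
  ext i
  refine Fin.addCases (fun j => ?_) (fun j => ?_) i <;> simp [firstHalf, Fin.ext_iff] <;>
    intro x <;> omega

theorem firstHalf_ne_compl {n : ℕ} (hn : 0 < n) : firstHalf n ≠ (firstHalf n)ᶜ := by
  obtain ⟨i, hi⟩ : (firstHalf n).Nonempty := card_pos.1 (by rwa [card_firstHalf])
  exact fun h => mem_compl.1 (h ▸ hi) hi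

theorem finAddFlip_smul_firstHalf (n : ℕ) :
    (finAddFlip : Equiv.Perm (Fin (n + n))) • firstHalf n = (firstHalf n)ᶜ := by
  rw [compl_firstHalf, firstHalf, smul_finset_def, map_eq_image, map_eq_image, image_image]
  congr 1
  funext j
  exact finAddFlip_apply_castAdd j n

section Halves

variable {R : Type*} {n : ℕ} {s : (Fin (n + n) → R) → ℝ}

theorem grp1_eq_map_firstHalf (v : Fin (n + n) → R) : grp1 n v = (firstHalf n).val.map v := by
  simp [grp1, firstHalf, Function.comp_def]

theorem grp2_eq_map_compl_firstHalf (v : Fin (n + n) → R) :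
    grp2 n v = (firstHalf n)ᶜ.val.map v := by
  simp [grp2, compl_firstHalf, Function.comp_def]

theorem grp1_arrange (y : Fin (n + n) → R) {B : Finset (Fin (n + n))} (hB : #B = n) :
    grp1 n (arrange n y B) = B.val.map y := by
  have hBc : #Bᶜ = n := by rw [card_compl, hB, Fintype.card_fin]; omega
  rw [arrange, dif_pos ⟨hB, hBc⟩, grp1]
  simp only [Fin.addCases_left]
  conv_rhs => rw [← map_orderEmbOfFin_univ B hB]
  rw [map_val, Multiset.map_map]
  rfl

theorem grp2_arrange (y : Fin (n + n) → R) {B : Finset (Fin (n + n))} (hB : #B = n) :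
    grp2 n (arrange n y B) = Bᶜ.val.map y := by
  have hBc : #Bᶜ = n := by rw [card_compl, hB, Fintype.card_fin]; omega
  rw [arrange, dif_pos ⟨hB, hBc⟩, grp2]
  simp only [Fin.addCases_right]
  conv_rhs => rw [← map_orderEmbOfFin_univ Bᶜ hBc]
  rw [map_val, Multiset.map_map]
  rfl

theorem IsGroupBased.apply_comp_perm (hs : IsGroupBased n s) (y : Fin (n + n) → R)
    (π : Equiv.Perm (Fin (n + n))) :
    s (y ∘ π) = s (arrange n y (π • firstHalf n)) := by
  have hcard : #(π • firstHalf n) = n := by rw [card_smul_finset, card_firstHalf]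
  apply hs
  · rw [grp1_eq_map_firstHalf, grp1_arrange y hcard, val_map_perm_smul]
  · rw [grp2_eq_map_compl_firstHalf, grp2_arrange y hcard, ← perm_smul_compl, val_map_perm_smul]

theorem IsGroupBased.apply_arrange_firstHalf (hs : IsGroupBased n s) (y : Fin (n + n) → R) :
    s (arrange n y (firstHalf n)) = s y := by
  simpa using (hs.apply_comp_perm y 1).symm

theorem IsGroupBased.apply_arrange_compl_firstHalf (hs : IsGroupBased n s)
    (hsym : ∀ v : Fin (n + n) → R, s (v ∘ ⇑finAddFlip) = s v) (y : Fin (n + n) → R) :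
    s (arrange n y (firstHalf n)ᶜ) = s y := by
  rw [← finAddFlip_smul_firstHalf, ← hs.apply_comp_perm, hsym]

end Halves

/-- for a symmetric group-based statistic on data of length `2n`,
the permutation-test p-value equals the fraction of equal-size bipartitions `B`
with `s(y) ≤ s(y_B)`, and in particular is at least `2/C(2n,n) = 1/C(2n-1,n)`. -/
theorem pt_group_based_eq_bipartition_fraction
    {R : Type*} (n : ℕ) (hn : 0 < n) (s : (Fin (n + n) → R) → ℝ)
    (hgb : ∀ v w : Fin (n + n) → R, grp1 n v = grp1 n w → grp2 n v = grp2 n w → s v = s w)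
    (hsym : ∀ v : Fin (n + n) → R, s (v ∘ ⇑finAddFlip) = s v)
    (y : Fin (n + n) → R) :
    pt (n + n) s y =
      ((((Finset.univ : Finset (Fin (n + n))).powersetCard n).filter
          fun B => s y ≤ s (arrange n y B)).card : ℝ) / ((n + n).choose n : ℝ) ∧
    1 / ((n + n - 1).choose n : ℝ) ≤ pt (n + n) s y := by
  have hs : IsGroupBased n s := hgb
  set F := (powersetCard n (univ : Finset (Fin (n + n)))).filter fun B => s y ≤ s (arrange n y B)
  have hpt : pt (n + n) s y = #F / (n + n).choose n := by
    have h := MulAction.sum_smul_div_card_eq (G := Equiv.Perm (Fin (n + n)))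
      (fun B => if s y ≤ s (arrange n y B) then (1 : ℝ) else 0) (firstHalf n)
    rw [image_perm_smul_eq_powersetCard, card_firstHalf, card_powersetCard, card_univ,
      Fintype.card_fin, Fintype.card_perm, Fintype.card_fin] at h
    rw [pt]
    simp only [hs.apply_comp_perm y]
    rw [h, sum_boole]
  have htwo : 2 ≤ #F := by
    have hsub : {firstHalf n, (firstHalf n)ᶜ} ⊆ F := by
      simp [insert_subset_iff, F, card_firstHalf, card_compl, hs.apply_arrange_firstHalf,
        hs.apply_arrange_compl_firstHalf hsym]
    simpa [card_pair (firstHalf_ne_compl hn)] using card_le_card hsub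
  refine ⟨hpt, ?_⟩
  rw [hpt, Nat.choose_add_self_eq_two_mul hn, Nat.cast_mul, Nat.cast_two]
  calc 1 / ((n + n - 1).choose n : ℝ) = 2 / (2 * (n + n - 1).choose n) := by field_simp
    _ ≤ #F / (2 * (n + n - 1).choose n) := by gcongr; exact_mod_cast htwo
end

section
/- Given the equivalence between probabilistic interference of a system and the existence of an effect of high inputs on low outputs (with low inputs fixed), a system $Q$ has probabilistic noninterference if and only if, for every fixed low-input sequence $\ell$, the (interventional) distribution of the low-output vector is independent of the high-input assignment; consequently, any statistical test of independence of the high-input variable and the low-output variable (with the low input fixed) is a test of noninterference. -/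
/-- Trace probability of a probabilistic Moore machine. -/
noncomputable def ptrace {S I O : Type*} [Fintype S] [DecidableEq S] [DecidableEq O]
    (τ : S → I → S → ℝ) (σ : S → O) : S → List I → List O → List S → ℝ
  | s, [], os, ss => if os = [σ s] ∧ ss = [s] then 1 else 0
  | s, i :: is, o :: os, s1 :: ss =>
      if o = σ s ∧ s1 = s then ∑ s' : S, τ s i s' * ptrace τ σ s' is os ss else 0
  | _, _ :: _, _, _ => 0

/-- The machine's marginal probability of a low-output sequence `lo` on the input
sequence `i`, from initial state `s0`. -/
noncomputable def machLow {S IH IL OH OL : Type*} [Fintype S] [Fintype OH]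
    [DecidableEq S] [DecidableEq OH] [DecidableEq OL]
    (τ : S → (IH × IL) → S → ℝ) (σ : S → OH × OL) (s0 : S) (k : ℕ)
    (i : Fin k → IH × IL) (lo : Fin (k + 1) → OL) : ℝ :=
  ∑ ho : Fin (k + 1) → OH, ∑ ssf : Fin (k + 1) → S,
    ptrace τ σ s0 (List.ofFn i) (List.ofFn fun j => (ho j, lo j)) (List.ofFn ssf)

/-- a system `Q` has probabilistic noninterference iff, for every
fixed low-input sequence `ℓ` and every fully supported distribution `μ` on
high-input sequences, the high input and the low-output sequence are
independent: the joint probability `μ(h) · P(lo | h, ℓ)` factors as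
`μ(h) · (∑ h', μ(h') · P(lo | h', ℓ))`.  Hence a test of independence of the two
random variables is a test of noninterference. -/
theorem noninterference_iff_independence
    {S IH IL OH OL : Type*} [Fintype S] [Fintype IH] [Fintype OH]
    [DecidableEq S] [DecidableEq OH] [DecidableEq OL]
    (τ : S → (IH × IL) → S → ℝ) (σ : S → OH × OL) (s0 : S)
    (hτ0 : ∀ s i s', 0 ≤ τ s i s') (hτ1 : ∀ s i, ∑ s', τ s i s' = 1) :
    (∀ (k : ℕ) (ℓ : Fin k → IL) (h1 h2 : Fin k → IH) (lo : Fin (k + 1) → OL),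
        machLow τ σ s0 k (fun j => (h1 j, ℓ j)) lo =
          machLow τ σ s0 k (fun j => (h2 j, ℓ j)) lo) ↔
    (∀ (k : ℕ) (ℓ : Fin k → IL) (μ : (Fin k → IH) → ℝ),
        (∀ h, 0 < μ h) → (∑ h, μ h = 1) →
        ∀ (h : Fin k → IH) (lo : Fin (k + 1) → OL),
          μ h * machLow τ σ s0 k (fun j => (h j, ℓ j)) lo =
            μ h * ∑ h' : Fin k → IH,
              μ h' * machLow τ σ s0 k (fun j => (h' j, ℓ j)) lo) := by
  constructor
  · intro H k ℓ μ hpos hsum h lo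
    congr 1
    have : ∀ h' : Fin k → IH,
        μ h' * machLow τ σ s0 k (fun j => (h' j, ℓ j)) lo =
          μ h' * machLow τ σ s0 k (fun j => (h j, ℓ j)) lo := by
      intro h'; rw [H k ℓ h' h lo]
    rw [Finset.sum_congr rfl (fun h' _ => this h'), ← Finset.sum_mul, hsum, one_mul]
  · intro H k ℓ h1 h2 lo
    have hne : Nonempty (Fin k → IH) := ⟨h1⟩
    set n := Fintype.card (Fin k → IH) with hn
    have hnpos : 0 < (n : ℝ) := by exact_mod_cast Fintype.card_pos
    set μ : (Fin k → IH) → ℝ := fun _ => (n : ℝ)⁻¹ with hμ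
    have hpos : ∀ h, 0 < μ h := fun _ => inv_pos.mpr hnpos
    have hsum : ∑ h, μ h = 1 := by
      have : ∑ h : Fin k → IH, μ h = (n : ℝ) * (n : ℝ)⁻¹ := by
        simp [μ, Finset.sum_const, hn, Finset.card_univ, mul_comm]
      rw [this, mul_inv_cancel₀ (ne_of_gt hnpos)]
    have e1 := H k ℓ μ hpos hsum h1 lo
    have e2 := H k ℓ μ hpos hsum h2 lo
    have c1 := mul_left_cancel₀ (ne_of_gt (hpos h1)) e1
    have c2 := mul_left_cancel₀ (ne_of_gt (hpos h2)) e2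
    rw [c1, c2]
end
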